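/- arXiv:2002.10928 — 4 statements merged into one kernel-verified Lean document; each statement's English description precedes it below -/
import Mathlib

section
/- Given a tuple of nonnegative integers (b_1, ..., b_n) with even sum, there exists a tuple of integers (c_1, ..., c_n) satisfying 0 ≤ c_i ≤ b_i for all i, the balancedness condition ∑_{i=1}^n c_i = (1/2)∑_{i=1}^n b_i, and the dominance condition ∑_{j=1}^i c_j ≤ (1/2)(c_i + ∑_{j=1}^{i-1} b_j) for all i = 1, ..., n, if and only if no single b_i exceeds half the total sum, i.e., b_i ≤ (1/2)∑_{j=1}^n b_j for all i. -/
/-!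
Splitting the total sum at index `i` and using `c ≤ b` on the indices after `i`, balancedness and
dominance give `b i ≤ c i + ∑_{j > i} b j` and `c i ≤ ∑_{j < i} b j`, whence `2 b i ≤ ∑ b`.

Conversely, with `P k = ∑_{j < k} b j` and `∑ b = 2h`, take `c k = (P (k+1) - h)⁺ - (P k - h)⁺`:
the prefix sums of `c` telescope to `(P (k+1) - h)⁺`, so `c` is balanced, and dominance at `k`
reduces to `P (k+1) ≤ 2h` when `P k ≥ h` and to `b k ≤ h` when `P k < h < P (k+1)`.
-/

open Finset

theorem two_mul_le_sum_of_dominated {ι : Type*} [LinearOrder ι] [Fintype ι]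
    [LocallyFiniteOrderBot ι] {b c : ι → ℕ} (hcb : ∀ i, c i ≤ b i)
    (hsum : 2 * ∑ i, c i = ∑ i, b i)
    (hdom : ∀ i, 2 * ∑ j ∈ Iic i, c j ≤ c i + ∑ j ∈ Iio i, b j) (i : ι) :
    2 * b i ≤ ∑ j, b j := by
  have hc := sum_add_sum_compl (Iic i) c
  have hb := sum_add_sum_compl (Iic i) b
  have hdomi := hdom i
  rw [← add_sum_Iio_eq_sum_Iic] at hc hb hdomi
  have htail : ∑ j ∈ (Iic i)ᶜ, c j ≤ ∑ j ∈ (Iic i)ᶜ, b j := sum_le_sum fun j _ => hcb j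
  omega

theorem sum_range_tsub_tsub_prefix (b : ℕ → ℕ) (h m : ℕ) :
    ∑ k ∈ range m, ((∑ j ∈ range (k + 1), b j - h) - (∑ j ∈ range k, b j - h)) =
      ∑ j ∈ range m, b j - h := by
  have hmono : Monotone fun m => ∑ j ∈ range m, b j - h :=
    fun x y hxy => Nat.sub_le_sub_right (sum_le_sum_of_subset (range_subset_range.2 hxy)) h
  simpa using sum_range_tsub hmono m

theorem exists_balanced_dominated_of_le_half (b : ℕ → ℕ) (n h : ℕ)
    (hsum : ∑ k ∈ range n, b k = 2 * h) (hb : ∀ k < n, b k ≤ h) :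
    ∃ c : ℕ → ℕ, (∀ k, c k ≤ b k) ∧ ∑ k ∈ range n, c k = h ∧
      ∀ k < n, 2 * ∑ j ∈ range (k + 1), c j ≤ c k + ∑ j ∈ range k, b j := by
  refine ⟨fun k => (∑ j ∈ range (k + 1), b j - h) - (∑ j ∈ range k, b j - h),
    fun k => ?_, ?_, fun k hk => ?_⟩ <;> simp only [sum_range_tsub_tsub_prefix]
  · have := sum_range_succ b k
    omega
  · omega
  · have hprefix : ∑ j ∈ range (k + 1), b j ≤ ∑ j ∈ range n, b j :=
      sum_le_sum_of_subset (range_subset_range.2 hk)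
    have := sum_range_succ b k
    have := hb k hk
    omega

theorem Fin.sum_Iio_eq_sum_range {M : Type*} [AddCommMonoid M] {n : ℕ} (f : ℕ → M)
    (i : Fin n) : ∑ j ∈ Iio i, f j = ∑ k ∈ range i, f k := by
  rw [← Nat.Iio_eq_range, ← Fin.map_valEmbedding_Iio, sum_map]
  rfl

theorem Fin.sum_Iic_eq_sum_range {M : Type*} [AddCommMonoid M] {n : ℕ} (f : ℕ → M)
    (i : Fin n) : ∑ j ∈ Iic i, f j = ∑ k ∈ range (i + 1), f k := by
  rw [Nat.range_succ_eq_Iic, ← Fin.map_valEmbedding_Iic, sum_map]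
  rfl

theorem stmt_0_general (n : ℕ) (b : Fin n → ℕ) (heven : Even (∑ i, b i)) :
    (∃ c : Fin n → ℕ,
        (∀ i, c i ≤ b i) ∧
        2 * ∑ i, c i = ∑ i, b i ∧
        ∀ i : Fin n,
          2 * ∑ j ∈ Finset.univ.filter (fun j => j ≤ i), c j ≤
            c i + ∑ j ∈ Finset.univ.filter (fun j => j < i), b j) ↔
    ∀ i, 2 * b i ≤ ∑ j, b j := by
  simp only [filter_ge_eq_Iic, filter_gt_eq_Iio]
  constructor
  · rintro ⟨c, hcb, hsum, hdom⟩
    exact two_mul_le_sum_of_dominated hcb hsum hdom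
  · intro hb
    obtain ⟨h, hh⟩ := heven
    let B : ℕ → ℕ := fun k => if hk : k < n then b ⟨k, hk⟩ else 0
    have hbB : b = fun i : Fin n => B i := funext fun i => by simp [B]
    have hBsum : ∑ k ∈ range n, B k = 2 * h := by
      rw [← Fin.sum_univ_eq_sum_range, ← hbB, hh, two_mul]
    obtain ⟨c, hcB, hcsum, hcdom⟩ := exists_balanced_dominated_of_le_half B n h hBsum
      fun k hk => by simpa [B, hk, hh, ← two_mul] using hb ⟨k, hk⟩
    refine ⟨fun i => c i, fun i => hbB ▸ hcB i, ?_, fun i => ?_⟩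
    · rw [Fin.sum_univ_eq_sum_range (fun k => c k), hcsum, hh, two_mul]
    · rw [hbB, Fin.sum_Iic_eq_sum_range, Fin.sum_Iio_eq_sum_range]
      exact hcdom i i.isLt

/-- Given a tuple of nonnegative integers `(b 1, …, b n)` with even sum, there exists a
tuple `(c 1, …, c n)` with `0 ≤ c i ≤ b i`, the balancedness condition
`∑ c i = (1/2) ∑ b i`, and the dominance condition
`∑_{j ≤ i} c j ≤ (1/2) (c i + ∑_{j < i} b j)` for all `i`, if and only if no single
`b i` exceeds half the total sum. -/
theorem stmt_0 (n : ℕ) (hn : 0 < n) (b : Fin n → ℕ) (heven : Even (∑ i, b i)) :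
    (∃ c : Fin n → ℕ,
        (∀ i, c i ≤ b i) ∧
        2 * ∑ i, c i = ∑ i, b i ∧
        ∀ i : Fin n,
          2 * ∑ j ∈ Finset.univ.filter (fun j => j ≤ i), c j ≤
            c i + ∑ j ∈ Finset.univ.filter (fun j => j < i), b j) ↔
    ∀ i, 2 * b i ≤ ∑ j, b j :=
  stmt_0_general n b heven
end

section
/- Let m ≥ 0 and let P/Q be a skew Young diagram (Q ⊆ P two Young diagrams, with column heights #^j P ≥ #^j Q for all j). Then P/Q admits a balanced semistandard filling with symbols from {1, ..., m} (each symbol occurring exactly (#P − #Q)/m times, rows nondecreasing left to right, columns strictly increasing top to bottom) if and only if every column of P/Q has height at most m and the total number of boxes #P − #Q is divisible by m. -/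
/-- A Young diagram of order `n`, given by its (weakly decreasing) row lengths,
vanishing from row `n` on. Rows are indexed from `0`. -/
def IsYoung (n : ℕ) (P : ℕ → ℕ) : Prop :=
  (∀ i, P (i + 1) ≤ P i) ∧ ∀ i, n ≤ i → P i = 0

/-- The total number of boxes of a Young diagram of order `n`. -/
def ysize (n : ℕ) (P : ℕ → ℕ) : ℕ := ∑ i ∈ Finset.range n, P i

/-- The height of the `j`-th column (columns indexed from `0`). -/
def colH (n : ℕ) (P : ℕ → ℕ) (j : ℕ) : ℕ :=
  ((Finset.range n).filter (fun i => j < P i)).card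

/-- The number of boxes of the skew diagram `P/Q`. -/
def skewSize (n : ℕ) (P Q : ℕ → ℕ) : ℕ := ∑ i ∈ Finset.range n, (P i - Q i)

/-- The skew diagram `P/Q` has thickness at most `m`: every column has at most
`m` boxes. -/
def ThickLE (n : ℕ) (P Q : ℕ → ℕ) (m : ℕ) : Prop :=
  ∀ j, colH n P j ≤ colH n Q j + m

/-- `T` is a semistandard filling of the skew diagram `P/Q`: rows weakly increase
from left to right, columns strictly increase from top to bottom.
`T i j` is the entry in row `i`, column `j`. -/
def SkewSemistd (P Q : ℕ → ℕ) (T : ℕ → ℕ → ℕ) : Prop :=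
  (∀ i j, Q i ≤ j → j + 1 < P i → T i j ≤ T i (j + 1)) ∧
  (∀ i j, Q i ≤ j → j < P (i + 1) → T i j < T (i + 1) j)

/-- All entries of the filling `T` of `P/Q` belong to the alphabet `{lo, …, hi}`. -/
def InAlpha (P Q : ℕ → ℕ) (T : ℕ → ℕ → ℕ) (lo hi : ℕ) : Prop :=
  ∀ i j, Q i ≤ j → j < P i → lo ≤ T i j ∧ T i j ≤ hi

/-- The number of occurrences of the symbol `s` among the first `j` columns of the
filling `T` of `P/Q`. -/
def cntCols (n : ℕ) (P Q : ℕ → ℕ) (T : ℕ → ℕ → ℕ) (s : ℕ) (j : ℕ) : ℕ :=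
  ∑ i ∈ Finset.range n, ((Finset.Ico (Q i) (min j (P i))).filter (fun c => T i c = s)).card

/-- The total number of occurrences of the symbol `s` in the filling `T` of `P/Q`. -/
def cntAll (n : ℕ) (P Q : ℕ → ℕ) (T : ℕ → ℕ → ℕ) (s : ℕ) : ℕ :=
  ∑ i ∈ Finset.range n, ((Finset.Ico (Q i) (P i)).filter (fun c => T i c = s)).card

/-- The filling `T` of `P/Q` is balanced with respect to the alphabet `{lo, …, hi}`:
each symbol occurs exactly `(#P/Q)/(hi+1-lo)` times. -/
def BalancedF (n : ℕ) (P Q : ℕ → ℕ) (T : ℕ → ℕ → ℕ) (lo hi : ℕ) : Prop :=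
  ∀ s, lo ≤ s → s ≤ hi → (hi + 1 - lo) * cntAll n P Q T s = skewSize n P Q

/-- The filling `T` of `P/Q` is `α_i`-codominant: among the first `j` columns there
are at least as many occurrences of `i+1` as of `i`, for every `j`. -/
def Codom (n : ℕ) (P Q : ℕ → ℕ) (T : ℕ → ℕ → ℕ) (i : ℕ) : Prop :=
  ∀ j, cntCols n P Q T i j ≤ cntCols n P Q T (i + 1) j

/-- The length of the bridge at height `i` (for `1 ≤ i ≤ n`) of the skew diagram
`P/Q`: the number of columns whose height in `Q` is `i-1` and in `P` is `i`. -/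
def bridge (n : ℕ) (P Q : ℕ → ℕ) (i : ℕ) : ℕ :=
  ((Finset.range (P 0)).filter (fun j => colH n Q j = i - 1 ∧ colH n P j = i)).card

namespace BalAux

lemma young_anti {n : ℕ} {P : ℕ → ℕ} (hP : IsYoung n P) : Antitone P :=
  antitone_nat_of_succ_le hP.1

lemma galois (M : ℕ) (g : ℕ → ℕ) (hstep : ∀ t, g (t + 1) ≤ g t)
    (hvan : ∀ t, M ≤ t → g t = 0) (i j : ℕ) :
    j < ((Finset.range M).filter (fun t => i < g t)).card ↔ i < g j := by
  have hanti : Antitone g := antitone_nat_of_succ_le hstep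
  constructor
  · intro h
    by_contra hc
    push_neg at hc
    have hsub : (Finset.range M).filter (fun t => i < g t) ⊆ Finset.range j := by
      intro t ht
      simp only [Finset.mem_filter, Finset.mem_range] at *
      by_contra htj
      push_neg at htj
      exact absurd (lt_of_lt_of_le ht.2 (le_trans (hanti htj) hc)) (lt_irrefl i)
    have := Finset.card_le_card hsub
    simp only [Finset.card_range] at this
    omega
  · intro h
    have hjM : j < M := by
      by_contra hjM
      push_neg at hjM
      rw [hvan j hjM] at h
      omega
    have hsub : Finset.range (j + 1) ⊆ (Finset.range M).filter (fun t => i < g t) := by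
      intro t ht
      simp only [Finset.mem_range] at ht
      simp only [Finset.mem_filter, Finset.mem_range]
      exact ⟨lt_of_le_of_lt (Nat.le_of_lt_succ ht) hjM,
        lt_of_lt_of_le h (hanti (Nat.le_of_lt_succ ht))⟩
    have := Finset.card_le_card hsub
    simp only [Finset.card_range] at this
    omega

lemma galois_colH {n : ℕ} {P : ℕ → ℕ} (hP : IsYoung n P) (i j : ℕ) :
    i < colH n P j ↔ j < P i :=
  galois n P hP.1 hP.2 j i

lemma colH_le_n {n : ℕ} (P : ℕ → ℕ) (j : ℕ) : colH n P j ≤ n := by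
  have := Finset.card_filter_le (Finset.range n) (fun i => j < P i)
  simpa [colH] using this

lemma colH_mono {n : ℕ} {P Q : ℕ → ℕ} (hQP : ∀ i, Q i ≤ P i) (j : ℕ) :
    colH n Q j ≤ colH n P j := by
  apply Finset.card_le_card
  intro i hi
  simp only [Finset.mem_filter, Finset.mem_range] at *
  exact ⟨hi.1, lt_of_lt_of_le hi.2 (hQP i)⟩

lemma colH_step {n : ℕ} (P : ℕ → ℕ) (j : ℕ) : colH n P (j + 1) ≤ colH n P j := by
  apply Finset.card_le_card
  intro i hi
  simp only [Finset.mem_filter, Finset.mem_range] at *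
  exact ⟨hi.1, by omega⟩

lemma colH_vanish {n : ℕ} {P : ℕ → ℕ} (hP : IsYoung n P) (j : ℕ) (hj : P 0 ≤ j) :
    colH n P j = 0 := by
  rw [colH, Finset.card_eq_zero, Finset.filter_eq_empty_iff]
  intro i _
  have := young_anti hP (Nat.zero_le i)
  omega


lemma le_of_lt_imp {a b : ℕ} (h : ∀ j, j < a → j < b) : a ≤ b := by
  by_contra hc
  push_neg at hc
  exact absurd (h b hc) (lt_irrefl b)

lemma filter_range_ico (M a b : ℕ) (hb : b ≤ M) :
    (Finset.range M).filter (fun j => a ≤ j ∧ j < b) = Finset.Ico a b := by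
  ext j
  simp only [Finset.mem_filter, Finset.mem_range, Finset.mem_Ico]
  omega

lemma skew_cols {n : ℕ} {P Q : ℕ → ℕ} (hP : IsYoung n P) (hQ : IsYoung n Q) :
    skewSize n P Q = ∑ j ∈ Finset.range (P 0), (colH n P j - colH n Q j) := by
  have key : ∀ i ∈ Finset.range n,
      P i - Q i = ∑ j ∈ Finset.range (P 0), (if Q i ≤ j ∧ j < P i then 1 else 0) := by
    intro i _
    rw [Finset.sum_boole, filter_range_ico _ _ _ (young_anti hP (Nat.zero_le i))]
    simp [Nat.card_Ico]
  rw [skewSize, Finset.sum_congr rfl key, Finset.sum_comm]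
  apply Finset.sum_congr rfl
  intro j _
  have key2 : ∀ i ∈ Finset.range n,
      (if Q i ≤ j ∧ j < P i then (1:ℕ) else 0)
        = if colH n Q j ≤ i ∧ i < colH n P j then 1 else 0 := by
    intro i _
    have h1 := galois_colH hP i j
    have h2 := galois_colH hQ i j
    refine if_congr ?_ rfl rfl
    constructor
    · rintro ⟨ha, hb⟩
      refine ⟨?_, h1.mpr hb⟩
      by_contra hc
      push_neg at hc
      have := h2.mp hc
      omega
    · rintro ⟨ha, hb⟩
      refine ⟨?_, h1.mp hb⟩
      by_contra hc
      push_neg at hc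
      have := h2.mpr hc
      omega
  rw [Finset.sum_congr rfl key2, Finset.sum_boole,
    filter_range_ico _ _ _ (colH_le_n P j)]
  simp [Nat.card_Ico]

lemma ico_step (M : ℕ) (pred : ℕ → Prop) [DecidablePred pred] (j : ℕ) :
    ((Finset.Ico j M).filter pred).card
      = ((Finset.Ico (j + 1) M).filter pred).card + (if j < M ∧ pred j then 1 else 0) := by
  by_cases hj : j < M
  · have : Finset.Ico j M = Finset.Ico j (j + 1) ∪ Finset.Ico (j + 1) M :=
      (Finset.Ico_union_Ico_eq_Ico (by omega) (by omega)).symm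
    rw [this, Finset.filter_union, Finset.card_union_of_disjoint
      (Finset.disjoint_filter_filter (Finset.Ico_disjoint_Ico_consecutive j (j+1) M))]
    have : Finset.Ico j (j + 1) = {j} := by
      ext t; simp only [Finset.mem_Ico, Finset.mem_singleton]; omega
    rw [this, Finset.filter_singleton]
    by_cases hp : pred j <;> simp [hp, hj] <;> omega
  · have h1 : Finset.Ico j M = ∅ := by rw [Finset.Ico_eq_empty_iff]; omega
    have h2 : Finset.Ico (j + 1) M = ∅ := by rw [Finset.Ico_eq_empty_iff]; omega
    simp [h1, h2, hj]
def colF (n m : ℕ) (P Q : ℕ → ℕ) (j : ℕ) : ℕ :=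
  ((Finset.Ico j (P 0)).filter (fun t => colH n Q t + m = colH n P t)).card

def colE (n m : ℕ) (P Q : ℕ → ℕ) (j : ℕ) : ℕ :=
  ((Finset.Ico j (P 0)).filter
    (fun t => colH n Q t < colH n P t ∧ colH n P t < colH n Q t + m)).card

def cf (n m k : ℕ) (P Q : ℕ → ℕ) (j : ℕ) : ℕ :=
  colF n m P Q j + min (k - colF n m P Q 0) (colE n m P Q j)

def rf (n m k : ℕ) (P Q : ℕ → ℕ) (j : ℕ) : ℕ :=
  colH n P j - (cf n m k P Q j - cf n m k P Q (j + 1))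

def Rf (n m k : ℕ) (P Q : ℕ → ℕ) (i : ℕ) : ℕ :=
  ((Finset.range (P 0)).filter (fun j => i < rf n m k P Q j)).card

lemma cf_step (n m k : ℕ) (P Q : ℕ → ℕ) (j : ℕ) :
    cf n m k P Q (j + 1) ≤ cf n m k P Q j ∧ cf n m k P Q j ≤ cf n m k P Q (j + 1) + 1 ∧
    (cf n m k P Q j = cf n m k P Q (j + 1) + 1 ↔
      (j < P 0 ∧ (colH n Q j + m = colH n P j ∨
        (colH n Q j < colH n P j ∧ colH n P j < colH n Q j + m ∧
          colE n m P Q (j + 1) < k - colF n m P Q 0)))) := by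
  have hF := ico_step (P 0) (fun t => colH n Q t + m = colH n P t) j
  have hE := ico_step (P 0)
    (fun t => colH n Q t < colH n P t ∧ colH n P t < colH n Q t + m) j
  unfold cf colF colE

  split_ifs at hF hE with h1 h2 <;> omega

lemma delig {n m k : ℕ} {P Q : ℕ → ℕ} (hm : 1 ≤ m) (j : ℕ)
    (h : cf n m k P Q j = cf n m k P Q (j + 1) + 1) :
    j < P 0 ∧ colH n Q j < colH n P j := by
  have := (cf_step n m k P Q j).2.2.mp h
  omega

lemma dforced {n m k : ℕ} {P Q : ℕ → ℕ} (j : ℕ) (hj : j < P 0)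
    (h : colH n Q j + m = colH n P j) :
    cf n m k P Q j = cf n m k P Q (j + 1) + 1 :=
  (cf_step n m k P Q j).2.2.mpr ⟨hj, Or.inl h⟩

lemma dnext {n m k : ℕ} {P Q : ℕ → ℕ} (hm : 1 ≤ m) (hP : IsYoung n P)
    (hQP : ∀ i, Q i ≤ P i) (hT : ThickLE n P Q m) (j : ℕ)
    (hD : cf n m k P Q j = cf n m k P Q (j + 1) + 1)
    (hpp : colH n P (j + 1) = colH n P j) :
    cf n m k P Q (j + 1) = cf n m k P Q (j + 1 + 1) + 1 := by
  obtain ⟨hjM, hcase⟩ := (cf_step n m k P Q j).2.2.mp hD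
  have hq1 : colH n Q (j + 1) ≤ colH n Q j := colH_step Q j
  have ht1 := hT (j + 1)
  have hqp1 : colH n Q (j + 1) ≤ colH n P (j + 1) := colH_mono hQP (j + 1)
  have hqp0 : colH n Q j ≤ colH n P j := colH_mono hQP j
  have hj1M : j + 1 < P 0 := by
    by_contra hc
    push_neg at hc
    have h0 := colH_vanish hP (j + 1) hc
    omega
  apply (cf_step n m k P Q (j + 1)).2.2.mpr
  refine ⟨hj1M, ?_⟩
  rcases hcase with hf | ⟨h1, h2, h3⟩
  · left; omega
  · by_cases hf1 : colH n Q (j + 1) + m = colH n P (j + 1)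
    · left; exact hf1
    · right
      refine ⟨by omega, by omega, ?_⟩
      have hE := ico_step (P 0)
        (fun t => colH n Q t < colH n P t ∧ colH n P t < colH n Q t + m) (j + 1)
      rw [if_pos (show j + 1 < P 0 ∧ _ from ⟨hj1M, by omega, by omega⟩)] at hE
      unfold colE at h3 ⊢
      omega

lemma cf_top (n m k : ℕ) (P Q : ℕ → ℕ) : cf n m k P Q (P 0) = 0 := by
  unfold cf colF colE
  simp

lemma cf_zero {n m k : ℕ} {P Q : ℕ → ℕ} (hm : 1 ≤ m) (hP : IsYoung n P) (hQ : IsYoung n Q)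
    (hQP : ∀ i, Q i ≤ P i) (hT : ThickLE n P Q m) (hN : skewSize n P Q = m * k) :
    cf n m k P Q 0 = k := by
  have hsum : ∑ j ∈ Finset.range (P 0), (colH n P j - colH n Q j) = m * k := by
    rw [← skew_cols hP hQ, hN]
  -- m * colF 0 ≤ m * k
  have h1 : m * colF n m P Q 0 ≤ m * k := by
    have hsub : (Finset.range (P 0)).filter (fun t => colH n Q t + m = colH n P t)
        ⊆ Finset.range (P 0) := Finset.filter_subset _ _
    have hc : ∑ j ∈ (Finset.range (P 0)).filter (fun t => colH n Q t + m = colH n P t),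
        (colH n P j - colH n Q j) = m * colF n m P Q 0 := by
      rw [Finset.sum_congr rfl (fun j hj => ?_), Finset.sum_const, smul_eq_mul, mul_comm]
      · unfold colF
        rw [Finset.range_eq_Ico]
      · simp only [Finset.mem_filter] at hj
        omega
    calc m * colF n m P Q 0
        = ∑ j ∈ (Finset.range (P 0)).filter (fun t => colH n Q t + m = colH n P t),
            (colH n P j - colH n Q j) := hc.symm
      _ ≤ ∑ j ∈ Finset.range (P 0), (colH n P j - colH n Q j) :=
          Finset.sum_le_sum_of_subset hsub
      _ = m * k := hsum
  -- m * k ≤ m * (colF 0 + colE 0)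
  have h2 : m * k ≤ m * (colF n m P Q 0 + colE n m P Q 0) := by
    have key : ∀ j ∈ Finset.range (P 0), colH n P j - colH n Q j ≤
        m * (if colH n Q j + m = colH n P j then 1 else 0) +
        m * (if colH n Q j < colH n P j ∧ colH n P j < colH n Q j + m then 1 else 0) := by
      intro j _
      have := hT j
      have := colH_mono (n := n) hQP j
      split_ifs <;> omega
    calc m * k = ∑ j ∈ Finset.range (P 0), (colH n P j - colH n Q j) := hsum.symm
      _ ≤ ∑ j ∈ Finset.range (P 0),
            (m * (if colH n Q j + m = colH n P j then 1 else 0) +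
             m * (if colH n Q j < colH n P j ∧ colH n P j < colH n Q j + m then 1 else 0)) :=
          Finset.sum_le_sum key
      _ = m * (colF n m P Q 0 + colE n m P Q 0) := by
          rw [Finset.sum_add_distrib, ← Finset.mul_sum, ← Finset.mul_sum,
            Finset.sum_boole, Finset.sum_boole]
          unfold colF colE
          rw [Finset.range_eq_Ico]
          push_cast
          ring
  have hF0 : colF n m P Q 0 ≤ k := Nat.le_of_mul_le_mul_left h1 (by omega)
  have hE0 : k ≤ colF n m P Q 0 + colE n m P Q 0 := Nat.le_of_mul_le_mul_left h2 (by omega)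
  unfold cf
  omega
lemma rf_le_p (n m k : ℕ) (P Q : ℕ → ℕ) (j : ℕ) : rf n m k P Q j ≤ colH n P j :=
  Nat.sub_le _ _

lemma p_le_rf (n m k : ℕ) (P Q : ℕ → ℕ) (j : ℕ) : colH n P j ≤ rf n m k P Q j + 1 := by
  have := cf_step n m k P Q j
  unfold rf
  omega

lemma rf_ge_q {n m k : ℕ} {P Q : ℕ → ℕ} (hm : 1 ≤ m) (hQP : ∀ i, Q i ≤ P i) (j : ℕ) :
    colH n Q j ≤ rf n m k P Q j := by
  have hqp : colH n Q j ≤ colH n P j := colH_mono hQP j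
  have hs := cf_step n m k P Q j
  by_cases hD : cf n m k P Q j = cf n m k P Q (j + 1) + 1
  · have := delig hm j hD
    unfold rf
    omega
  · unfold rf
    omega

lemma rf_step {n m k : ℕ} {P Q : ℕ → ℕ} (hm : 1 ≤ m) (hP : IsYoung n P)
    (hQP : ∀ i, Q i ≤ P i) (hT : ThickLE n P Q m) (j : ℕ) :
    rf n m k P Q (j + 1) ≤ rf n m k P Q j := by
  have hs0 := cf_step n m k P Q j
  have hs1 := cf_step n m k P Q (j + 1)
  have hps : colH n P (j + 1) ≤ colH n P j := colH_step P j
  by_cases hpp : colH n P (j + 1) = colH n P j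
  · by_cases hD : cf n m k P Q j = cf n m k P Q (j + 1) + 1
    · have h2 := dnext hm hP hQP hT j hD hpp
      unfold rf
      omega
    · unfold rf
      omega
  · unfold rf
    omega

lemma rf_vanish {n m k : ℕ} {P Q : ℕ → ℕ} (hP : IsYoung n P) (j : ℕ) (hj : P 0 ≤ j) :
    rf n m k P Q j = 0 := by
  have := colH_vanish hP j hj
  unfold rf
  omega

lemma rf_thick {n m k : ℕ} {P Q : ℕ → ℕ} (hm : 1 ≤ m) (hP : IsYoung n P)
    (hQP : ∀ i, Q i ≤ P i) (hT : ThickLE n P Q m) (j : ℕ) :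
    rf n m k P Q j ≤ colH n Q j + (m - 1) := by
  have ht := hT j
  by_cases hD : cf n m k P Q j = cf n m k P Q (j + 1) + 1
  · have := delig hm j hD
    unfold rf
    omega
  · by_cases hj : j < P 0
    · have hnf : ¬ (colH n Q j + m = colH n P j) := fun h => hD (dforced j hj h)
      have := rf_le_p n m k P Q j
      omega
    · have := rf_vanish (n := n) (m := m) (k := k) (P := P) (Q := Q) hP j (by omega)
      omega

lemma Rf_galois {n m k : ℕ} {P Q : ℕ → ℕ} (hm : 1 ≤ m) (hP : IsYoung n P)
    (hQP : ∀ i, Q i ≤ P i) (hT : ThickLE n P Q m) (i j : ℕ) :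
    j < Rf n m k P Q i ↔ i < rf n m k P Q j :=
  galois (P 0) (rf n m k P Q) (rf_step hm hP hQP hT) (fun t ht => rf_vanish hP t ht) i j

lemma Rf_young {n m k : ℕ} {P Q : ℕ → ℕ} (hP : IsYoung n P) :
    IsYoung n (Rf n m k P Q) := by
  constructor
  · intro i
    apply Finset.card_le_card
    intro j hj
    simp only [Finset.mem_filter, Finset.mem_range] at *
    exact ⟨hj.1, by omega⟩
  · intro i hi
    rw [Rf, Finset.card_eq_zero, Finset.filter_eq_empty_iff]
    intro j _
    have h1 := rf_le_p n m k P Q j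
    have h2 := colH_le_n (n := n) P j
    omega

lemma colH_Rf {n m k : ℕ} {P Q : ℕ → ℕ} (hm : 1 ≤ m) (hP : IsYoung n P)
    (hQP : ∀ i, Q i ≤ P i) (hT : ThickLE n P Q m) (j : ℕ) :
    colH n (Rf n m k P Q) j = rf n m k P Q j := by
  have hle : rf n m k P Q j ≤ n := le_trans (rf_le_p n m k P Q j) (colH_le_n P j)
  rw [colH]
  have : (Finset.range n).filter (fun i => j < Rf n m k P Q i)
      = Finset.range (rf n m k P Q j) := by
    ext i
    simp only [Finset.mem_filter, Finset.mem_range]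
    rw [Rf_galois hm hP hQP hT i j]
    omega
  rw [this, Finset.card_range]

lemma sum_rf {n m k : ℕ} {P Q : ℕ → ℕ} (hm : 1 ≤ m) (hP : IsYoung n P) (hQ : IsYoung n Q)
    (hQP : ∀ i, Q i ≤ P i) (hT : ThickLE n P Q m) (hN : skewSize n P Q = m * k) :
    ∑ j ∈ Finset.range (P 0), (colH n P j - rf n m k P Q j) = k := by
  have hcong : ∀ j ∈ Finset.range (P 0),
      colH n P j - rf n m k P Q j = cf n m k P Q j - cf n m k P Q (j + 1) := by
    intro j _
    have hs := cf_step n m k P Q j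
    by_cases hD : cf n m k P Q j = cf n m k P Q (j + 1) + 1
    · have := delig hm j hD
      unfold rf
      omega
    · unfold rf
      omega
  rw [Finset.sum_congr rfl hcong]
  have tel : ∀ t, (∑ j ∈ Finset.range t, (cf n m k P Q j - cf n m k P Q (j + 1)))
      + cf n m k P Q t = cf n m k P Q 0 := by
    intro t
    induction t with
    | zero => simp
    | succ t ih =>
        rw [Finset.sum_range_succ]
        have := (cf_step n m k P Q t).1
        omega
  have h1 := tel (P 0)
  rw [cf_top] at h1
  rw [cf_zero hm hP hQ hQP hT hN] at h1
  omega

lemma exists_R {n m k : ℕ} {P Q : ℕ → ℕ} (hm : 1 ≤ m) (hP : IsYoung n P) (hQ : IsYoung n Q)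
    (hQP : ∀ i, Q i ≤ P i) (hT : ThickLE n P Q m) (hN : skewSize n P Q = m * k) :
    ∃ R : ℕ → ℕ, IsYoung n R ∧ (∀ i, Q i ≤ R i) ∧ (∀ i, R i ≤ P i) ∧
      (∀ i, P (i + 1) ≤ R i) ∧ ThickLE n R Q (m - 1) ∧
      skewSize n P R = k ∧ skewSize n R Q = (m - 1) * k := by
  refine ⟨Rf n m k P Q, Rf_young hP, ?_, ?_, ?_, ?_, ?_, ?_⟩
  · intro i
    apply le_of_lt_imp
    intro j hj
    have h1 : i < colH n Q j := (galois_colH hQ i j).mpr hj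
    have h2 : colH n Q j ≤ rf n m k P Q j := rf_ge_q hm hQP j
    exact (Rf_galois hm hP hQP hT i j).mpr (by omega)
  · intro i
    apply le_of_lt_imp
    intro j hj
    have h1 : i < rf n m k P Q j := (Rf_galois hm hP hQP hT i j).mp hj
    have h2 := rf_le_p n m k P Q j
    exact (galois_colH hP i j).mp (by omega)
  · intro i
    apply le_of_lt_imp
    intro j hj
    have h1 : i + 1 < colH n P j := (galois_colH hP (i + 1) j).mpr hj
    have h2 := p_le_rf n m k P Q j
    exact (Rf_galois hm hP hQP hT i j).mpr (by omega)
  · intro j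
    rw [colH_Rf hm hP hQP hT j]
    exact rf_thick hm hP hQP hT j
  · have hRP : ∀ i, Rf n m k P Q i ≤ P i := by
      intro i
      apply le_of_lt_imp
      intro j hj
      have h1 : i < rf n m k P Q j := (Rf_galois hm hP hQP hT i j).mp hj
      have h2 := rf_le_p n m k P Q j
      exact (galois_colH hP i j).mp (by omega)
    rw [skew_cols hP (Rf_young hP)]
    rw [Finset.sum_congr rfl (fun j _ => by rw [colH_Rf hm hP hQP hT j])]
    exact sum_rf hm hP hQ hQP hT hN
  · -- skewSize n R Q = (m-1) * k
    have hQR : ∀ i, Q i ≤ Rf n m k P Q i := by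
      intro i
      apply le_of_lt_imp
      intro j hj
      have h1 : i < colH n Q j := (galois_colH hQ i j).mpr hj
      have h2 : colH n Q j ≤ rf n m k P Q j := rf_ge_q hm hQP j
      exact (Rf_galois hm hP hQP hT i j).mpr (by omega)
    have hRP : ∀ i, Rf n m k P Q i ≤ P i := by
      intro i
      apply le_of_lt_imp
      intro j hj
      have h1 : i < rf n m k P Q j := (Rf_galois hm hP hQP hT i j).mp hj
      have h2 := rf_le_p n m k P Q j
      exact (galois_colH hP i j).mp (by omega)
    have hPR : skewSize n P (Rf n m k P Q) = k := by
      rw [skew_cols hP (Rf_young hP)]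
      rw [Finset.sum_congr rfl (fun j _ => by rw [colH_Rf hm hP hQP hT j])]
      exact sum_rf hm hP hQ hQP hT hN
    have hsplit : skewSize n P Q = skewSize n P (Rf n m k P Q) + skewSize n (Rf n m k P Q) Q := by
      rw [skewSize, skewSize, skewSize, ← Finset.sum_add_distrib]
      apply Finset.sum_congr rfl
      intro i _
      have := hQR i
      have := hRP i
      omega
    have hmul : (m - 1) * k = m * k - k := by
      have := Nat.sub_mul m 1 k
      omega
    omega
lemma build : ∀ m n : ℕ, ∀ P Q : ℕ → ℕ, IsYoung n P → IsYoung n Q → (∀ i, Q i ≤ P i) →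
    ThickLE n P Q m → m ∣ skewSize n P Q →
    ∃ T : ℕ → ℕ → ℕ, SkewSemistd P Q T ∧ InAlpha P Q T 1 m ∧
      ∀ s, 1 ≤ s → s ≤ m → m * cntAll n P Q T s = skewSize n P Q := by
  intro m
  induction m with
  | zero =>
    intro n P Q hP hQ hQP hT hdvd
    have hN : skewSize n P Q = 0 := Nat.eq_zero_of_zero_dvd hdvd
    have hrow : ∀ i, P i = Q i := by
      intro i
      by_cases hi : i < n
      · have h := hN
        rw [skewSize] at h
        have h2 := Finset.sum_eq_zero_iff.mp h i (Finset.mem_range.mpr hi)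
        have := hQP i
        omega
      · rw [hP.2 i (by omega), hQ.2 i (by omega)]
    refine ⟨fun _ _ => 0, ⟨fun i j h1 h2 => le_refl 0, fun i j h1 h2 => ?_⟩,
      fun i j h1 h2 => ?_, fun s hs1 hs2 => by omega⟩
    · have ha := hrow (i + 1)
      have hb := hQ.1 i
      omega
    · have := hrow i
      omega
  | succ m' ih =>
    intro n P Q hP hQ hQP hT hdvd
    obtain ⟨k, hk⟩ := hdvd
    have hm : 1 ≤ m' + 1 := by omega
    obtain ⟨R, hR, hQR, hRP, hPR1, hthR, hsPR, hsRQ⟩ := exists_R hm hP hQ hQP hT hk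
    have hthR' : ThickLE n R Q m' := by
      intro j
      have := hthR j
      omega
    have hdvd' : m' ∣ skewSize n R Q := by
      rw [hsRQ]
      simp only [Nat.add_sub_cancel]
      exact Dvd.intro k rfl
    obtain ⟨T', hss', hia', hbal'⟩ := ih n R Q hR hQ hQR hthR' hdvd'
    have hia'' : ∀ i j, Q i ≤ j → j < R i → 1 ≤ T' i j ∧ T' i j ≤ m' := by
      intro i j h1 h2
      exact hia' i j h1 h2
    set T : ℕ → ℕ → ℕ := fun i j => if j < R i then T' i j else m' + 1 with hT
    have hTlow : ∀ i j, j < R i → T i j = T' i j := by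
      intro i j h
      rw [hT]
      simp [h]
    have hThigh : ∀ i j, ¬ (j < R i) → T i j = m' + 1 := by
      intro i j h
      rw [hT]
      simp [h]
    refine ⟨T, ⟨?_, ?_⟩, ?_, ?_⟩
    · -- rows
      intro i j h1 h2
      by_cases hb : j + 1 < R i
      · rw [hTlow i j (by omega), hTlow i (j + 1) hb]
        exact hss'.1 i j h1 hb
      · by_cases ha : j < R i
        · rw [hTlow i j ha, hThigh i (j + 1) hb]
          have := (hia'' i j h1 ha).2
          omega
        · rw [hThigh i j ha, hThigh i (j + 1) hb]
    · -- columns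
      intro i j h1 h2
      by_cases hb : j < R (i + 1)
      · have ha : j < R i := lt_of_lt_of_le hb (hR.1 i)
        rw [hTlow i j ha, hTlow (i + 1) j hb]
        exact hss'.2 i j h1 hb
      · have ha : j < R i := lt_of_lt_of_le h2 (hPR1 i)
        rw [hTlow i j ha, hThigh (i + 1) j hb]
        have := (hia'' i j h1 ha).2
        omega
    · -- InAlpha
      intro i j h1 h2
      by_cases ha : j < R i
      · rw [hTlow i j ha]
        have := hia'' i j h1 ha
        omega
      · rw [hThigh i j ha]
        omega
    · -- balanced
      intro s hs1 hs2
      by_cases hsm : s = m' + 1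
      · -- count of top symbol equals k
        have hcnt : cntAll n P Q T s = skewSize n P R := by
          rw [cntAll, skewSize]
          apply Finset.sum_congr rfl
          intro i _
          have hsplit : Finset.Ico (Q i) (P i) = Finset.Ico (Q i) (R i) ∪ Finset.Ico (R i) (P i) :=
            (Finset.Ico_union_Ico_eq_Ico (hQR i) (hRP i)).symm
          rw [hsplit, Finset.filter_union, Finset.card_union_of_disjoint
            (Finset.disjoint_filter_filter (Finset.Ico_disjoint_Ico_consecutive _ _ _))]
          have e1 : (Finset.Ico (Q i) (R i)).filter (fun c => T i c = s) = ∅ := by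
            apply Finset.filter_false_of_mem
            intro c hc
            simp only [Finset.mem_Ico] at hc
            rw [hTlow i c hc.2]
            have := (hia'' i c hc.1 hc.2).2
            omega
          have e2 : (Finset.Ico (R i) (P i)).filter (fun c => T i c = s) = Finset.Ico (R i) (P i) := by
            apply Finset.filter_true_of_mem
            intro c hc
            simp only [Finset.mem_Ico] at hc
            rw [hThigh i c (by omega)]
            omega
          rw [e1, e2, Nat.card_Ico]
          simp
        rw [hcnt, hsPR, hk]
      · -- lower symbols
        have hslt : s ≤ m' := by omega
        have hcnt : cntAll n P Q T s = cntAll n R Q T' s := by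
          rw [cntAll, cntAll]
          apply Finset.sum_congr rfl
          intro i _
          have hsplit : Finset.Ico (Q i) (P i) = Finset.Ico (Q i) (R i) ∪ Finset.Ico (R i) (P i) :=
            (Finset.Ico_union_Ico_eq_Ico (hQR i) (hRP i)).symm
          rw [hsplit, Finset.filter_union, Finset.card_union_of_disjoint
            (Finset.disjoint_filter_filter (Finset.Ico_disjoint_Ico_consecutive _ _ _))]
          have e1 : (Finset.Ico (Q i) (R i)).filter (fun c => T i c = s)
              = (Finset.Ico (Q i) (R i)).filter (fun c => T' i c = s) := by
            apply Finset.filter_congr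
            intro c hc
            simp only [Finset.mem_Ico] at hc
            rw [hTlow i c hc.2]
          have e2 : (Finset.Ico (R i) (P i)).filter (fun c => T i c = s) = ∅ := by
            apply Finset.filter_false_of_mem
            intro c hc
            simp only [Finset.mem_Ico] at hc
            rw [hThigh i c (by omega)]
            omega
          rw [e1, e2]
          simp
        rw [hcnt]
        have hb := hbal' s hs1 hslt
        rw [hsRQ] at hb
        simp only [Nat.add_sub_cancel] at hb
        by_cases hm0 : m' = 0
        · omega
        · have hck : cntAll n R Q T' s = k := by
            have := Nat.eq_of_mul_eq_mul_left (show 0 < m' by omega) hb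
            exact this
          rw [hck, hk]

end BalAux

/-- A skew diagram `P/Q` admits a balanced semistandard filling with symbols from
`{1, …, m}` if and only if it has thickness at most `m` and its number of boxes is
divisible by `m`. -/
theorem stmt_1 (n m : ℕ) (P Q : ℕ → ℕ) (hP : IsYoung n P) (hQ : IsYoung n Q)
    (hQP : ∀ i, Q i ≤ P i) :
    (∃ T : ℕ → ℕ → ℕ, SkewSemistd P Q T ∧ InAlpha P Q T 1 m ∧ BalancedF n P Q T 1 m) ↔
    (ThickLE n P Q m ∧ m ∣ skewSize n P Q) := by
  constructor
  · rintro ⟨T, hss, hia, hbal⟩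
    constructor
    · intro j
      by_contra hc
      push_neg at hc
      have hQle : ∀ i, colH n Q j ≤ i → Q i ≤ j := by
        intro i hi
        by_contra h
        push_neg at h
        have := (BalAux.galois_colH hQ i j).mpr h
        omega
      have hkey : ∀ d, colH n Q j + d < colH n P j → d + 1 ≤ T (colH n Q j + d) j := by
        intro d
        induction d with
        | zero =>
            intro hd
            have hbox := hia (colH n Q j) j (hQle _ le_rfl)
              ((BalAux.galois_colH hP (colH n Q j) j).mp (by omega))
            simpa using hbox.1
        | succ d ihd =>
            intro hd
            have he : colH n Q j + (d + 1) = colH n Q j + d + 1 := rfl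
            rw [he]
            have h1 := ihd (by omega)
            have h2 := hss.2 (colH n Q j + d) j (hQle _ (by omega))
              ((BalAux.galois_colH hP (colH n Q j + d + 1) j).mp (by omega))
            omega
      have hd := hkey (colH n P j - colH n Q j - 1) (by omega)
      have hbox := hia (colH n Q j + (colH n P j - colH n Q j - 1)) j (hQle _ (by omega))
        ((BalAux.galois_colH hP _ j).mp (by omega))
      omega
    · cases m with
      | zero =>
        have : skewSize n P Q = 0 := by
          rw [skewSize]
          apply Finset.sum_eq_zero
          intro i _
          by_contra h
          have hlt : Q i < P i := by omega
          have := hia i (Q i) le_rfl hlt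
          omega
        simp [this]
      | succ m' =>
        have h := hbal 1 le_rfl (by omega)
        simp only [Nat.add_sub_cancel] at h
        exact ⟨cntAll n P Q T 1, h.symm⟩
  · rintro ⟨hth, hdvd⟩
    obtain ⟨T, h1, h2, h3⟩ := BalAux.build m n P Q hP hQ hQP hth hdvd
    refine ⟨T, h1, h2, ?_⟩
    intro s hs1 hs2
    simp only [Nat.add_sub_cancel]
    exact h3 s hs1 hs2
end

section
/- For k ≥ 1, the only balanced semistandard Young tableaux of order k on alphabet {1,...,k} that are codominant with respect to all simple roots α_1, ..., α_{k−1} (i.e., for each i and each j, among the first j columns the symbol i+1 occurs at least as often as the symbol i) are the rectangular tableaux R_k^a consisting of k rows of common length a, with the s-th row filled entirely with symbol s, for integer offsets a ≥ 0. -/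
/-!
Induct on the columns: suppose the first `j` columns are full and row `i` of them holds only the
symbol `i + 1`, and let `j < P 0`. The symbol `1` can only occur in row `0`, so if `T 0 j ≠ 1`
there would be exactly `j` ones, whereas balance forces `k` times that number to be the size of
the diagram, which exceeds `k * j`. Hence `T 0 j = 1`. Since the prefix counts of all symbols
agree up to column `j`, codominance at column `j + 1` says that column `j` contains `s + 1` as soon
as it contains `s`; as row `i` has entries at least `i + 1` and columns increase strictly, the
symbol `i + 1` must sit in row `i`. So column `j` is full and canonical as well.
-/

open Finset

def CanonicalUpTo (n : ℕ) (P : ℕ → ℕ) (T : ℕ → ℕ → ℕ) (j : ℕ) : Prop :=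
  (∀ i < n, j ≤ P i) ∧ ∀ i c, i < n → c < j → T i c = i + 1

section Young

variable {n : ℕ} {P : ℕ → ℕ}

lemma IsYoung.antitone (hP : IsYoung n P) : Antitone P :=
  antitone_nat_of_succ_le hP.1

lemma IsYoung.row_lt_of_lt {i j : ℕ} (hP : IsYoung n P) (h : j < P i) : i < n := by
  by_contra! hi
  rw [hP.2 i hi] at h
  omega

lemma skewSize_zero_right : skewSize n P (fun _ => 0) = ysize n P := by
  simp [skewSize, ysize]

end Young

section Counting

variable {n : ℕ} {P Q : ℕ → ℕ} {T : ℕ → ℕ → ℕ} {s : ℕ}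

lemma cntAll_eq_cntCols {j : ℕ} (h : ∀ i c, i < n → Q i ≤ c → c < P i → T i c = s → c < j) :
    cntAll n P Q T s = cntCols n P Q T s j := by
  refine sum_congr rfl fun i hi => congrArg card ?_
  ext c
  have := h i c (mem_range.mp hi)
  simp only [mem_filter, mem_Ico, lt_min_iff]
  tauto

lemma cntCols_succ (j : ℕ) :
    cntCols n P (fun _ => 0) T s (j + 1) =
      cntCols n P (fun _ => 0) T s j + #{i ∈ range n | j < P i ∧ T i j = s} := by
  rw [card_filter, cntCols, cntCols, ← sum_add_distrib]
  refine sum_congr rfl fun i _ => ?_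
  rcases lt_or_ge j (P i) with h | h
  · rw [min_eq_left h, min_eq_left h.le, ← range_eq_Ico, ← range_eq_Ico, range_add_one,
      filter_insert]
    split_ifs with hT <;> simp_all
  · rw [min_eq_right h, min_eq_right (h.trans (Nat.le_succ j))]
    simp [not_lt.mpr h]

lemma cntCols_of_canonical {j : ℕ} (hT : ∀ i c, i < n → c < min j (P i) → T i c = i + 1)
    (hs : 1 ≤ s) (hsn : s ≤ n) : cntCols n P (fun _ => 0) T s j = min j (P (s - 1)) := by
  rw [cntCols, sum_eq_single_of_mem (s - 1) (mem_range.mpr (by omega))]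
  · rw [filter_true_of_mem, Nat.card_Ico, Nat.sub_zero]
    intro c hc
    rw [hT _ _ (by omega) (mem_Ico.mp hc).2]
    omega
  · intro i hi hne
    rw [card_eq_zero, filter_eq_empty_iff]
    intro c hc
    rw [hT i c (mem_range.mp hi) (mem_Ico.mp hc).2]
    omega

lemma CanonicalUpTo.cntCols_eq {j : ℕ} (h : CanonicalUpTo n P T j) (hs : 1 ≤ s) (hsn : s ≤ n) :
    cntCols n P (fun _ => 0) T s j = j := by
  rw [cntCols_of_canonical (fun i c hi hc => h.2 i c hi (lt_min_iff.mp hc).1) hs hsn,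
    min_eq_left (h.1 _ (by omega))]

lemma exists_row_succ_of_codom {j : ℕ} (hc : Codom n P (fun _ => 0) T s)
    (hprefix : cntCols n P (fun _ => 0) T s j = cntCols n P (fun _ => 0) T (s + 1) j)
    (hrow : ∃ i < n, j < P i ∧ T i j = s) : ∃ i < n, j < P i ∧ T i j = s + 1 := by
  obtain ⟨i, hi, hji, hTi⟩ := hrow
  have hpos : 0 < #{i ∈ range n | j < P i ∧ T i j = s} :=
    card_pos.mpr ⟨i, mem_filter.mpr ⟨mem_range.mpr hi, hji, hTi⟩⟩
  have hcj := hc (j + 1)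
  rw [cntCols_succ, cntCols_succ, hprefix] at hcj
  have hpos' : 0 < #{i ∈ range n | j < P i ∧ T i j = s + 1} := by omega
  obtain ⟨i', hi'⟩ := card_pos.mp hpos'
  simp only [mem_filter, mem_range] at hi'
  exact ⟨i', hi'.1, hi'.2⟩

end Counting

section Semistandard

variable {k : ℕ} {P Q : ℕ → ℕ} {T : ℕ → ℕ → ℕ}

lemma SkewSemistd.row_mono (hss : SkewSemistd P Q T) {i c c' : ℕ} (hc : Q i ≤ c) (hcc' : c ≤ c')
    (hc' : c' < P i) : T i c ≤ T i c' := by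
  induction c', hcc' using Nat.le_induction with
  | base => rfl
  | succ c' hcc' ih => exact (ih (by omega)).trans (hss.1 i c' (hc.trans hcc') hc')

lemma SkewSemistd.col_strict (hP : IsYoung k P) (hss : SkewSemistd P (fun _ => 0) T)
    {i i' j : ℕ} (hii' : i < i') (hj : j < P i') : T i j < T i' j := by
  induction i', hii' using Nat.le_induction with
  | base => exact hss.2 i j (Nat.zero_le j) hj
  | succ i' hii' ih => exact (ih (hj.trans_le (hP.1 i'))).trans (hss.2 i' j (Nat.zero_le j) hj)

lemma SkewSemistd.row_add_le_entry (hP : IsYoung k P) (hss : SkewSemistd P (fun _ => 0) T)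
    {lo hi : ℕ} (ha : InAlpha P (fun _ => 0) T lo hi) {i j : ℕ} (hj : j < P i) :
    i + lo ≤ T i j := by
  induction i with
  | zero => simpa using (ha 0 j (Nat.zero_le j) hj).1
  | succ i ih =>
    have := ih (hj.trans_le (hP.1 i))
    have := hss.2 i j (Nat.zero_le j) hj
    omega

end Semistandard

section Forward

variable {k : ℕ} {P : ℕ → ℕ} {T : ℕ → ℕ → ℕ}

lemma entry_zero_eq_one (hP : IsYoung k P) (hss : SkewSemistd P (fun _ => 0) T)
    (ha : InAlpha P (fun _ => 0) T 1 k) (hb : BalancedF k P (fun _ => 0) T 1 k) {j : ℕ}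
    (h : CanonicalUpTo k P T j) (hj : j < P 0) : T 0 j = 1 := by
  have hk : 0 < k := hP.row_lt_of_lt hj
  by_contra hne
  have hones : cntAll k P (fun _ => 0) T 1 = j := by
    rw [cntAll_eq_cntCols, h.cntCols_eq le_rfl hk]
    intro i c _ _ hc hTc
    by_contra! hjc
    have := hss.row_add_le_entry hP ha hc
    obtain rfl : i = 0 := by omega
    have := hss.row_mono (Nat.zero_le j) hjc hc
    have := (ha 0 j (Nat.zero_le j) hj).1
    omega
  have hsize : k * j < ysize k P :=
    calc k * j = ∑ _i ∈ range k, j := by simp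
      _ < ∑ i ∈ range k, P i :=
        sum_lt_sum (fun i hi => h.1 i (mem_range.mp hi)) ⟨0, mem_range.mpr hk, hj⟩
  have hbal := hb 1 le_rfl hk
  rw [hones, skewSize_zero_right, Nat.add_sub_cancel] at hbal
  omega

lemma CanonicalUpTo.succ (hP : IsYoung k P) (hss : SkewSemistd P (fun _ => 0) T)
    (ha : InAlpha P (fun _ => 0) T 1 k) (hb : BalancedF k P (fun _ => 0) T 1 k)
    (hc : ∀ i, 1 ≤ i → i < k → Codom k P (fun _ => 0) T i) {j : ℕ}
    (h : CanonicalUpTo k P T j) (hj : j < P 0) : CanonicalUpTo k P T (j + 1) := by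
  have hcol : ∀ i < k, j < P i ∧ T i j = i + 1 := by
    intro i hi
    induction i with
    | zero => exact ⟨hj, entry_zero_eq_one hP hss ha hb h hj⟩
    | succ i ih =>
      obtain ⟨hji, hTi⟩ := ih (by omega)
      obtain ⟨i', -, hji', hTi'⟩ := exists_row_succ_of_codom (hc (i + 1) (by omega) hi)
        (by rw [h.cntCols_eq (by omega) (by omega), h.cntCols_eq (by omega) hi])
        ⟨i, by omega, hji, hTi⟩
      have hi'le := hss.row_add_le_entry hP ha hji'
      have hii' : i < i' := by
        by_contra! hi'i
        rcases hi'i.lt_or_eq with hlt | rfl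
        · have := hss.col_strict hP hlt hji
          omega
        · omega
      obtain rfl : i' = i + 1 := by omega
      exact ⟨hji', hTi'⟩
  refine ⟨fun i hi => (hcol i hi).1, fun i c hi hc => ?_⟩
  rcases (Nat.lt_succ_iff.mp hc).lt_or_eq with hc | rfl
  · exact h.2 i c hi hc
  · exact (hcol i hi).2

end Forward

section Rectangle

variable {n a : ℕ} {P : ℕ → ℕ} {T : ℕ → ℕ → ℕ}

lemma skewSemistd_of_canonical (hP : IsYoung n P)
    (hT : ∀ i j, i < n → j < P i → T i j = i + 1) : SkewSemistd P (fun _ => 0) T := by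
  refine ⟨fun i j _ hj => ?_, fun i j _ hj => ?_⟩
  · have hi := hP.row_lt_of_lt hj
    rw [hT i j hi (by omega), hT i (j + 1) hi hj]
  · rw [hT i j (by have := hP.row_lt_of_lt hj; omega) (hj.trans_le (hP.1 i)),
      hT (i + 1) j (hP.row_lt_of_lt hj) hj]
    omega

lemma inAlpha_of_canonical (hP : IsYoung n P) (hT : ∀ i j, i < n → j < P i → T i j = i + 1) :
    InAlpha P (fun _ => 0) T 1 n := by
  intro i j _ hj
  have hi := hP.row_lt_of_lt hj
  rw [hT i j hi hj]
  omega

lemma balancedF_of_rectangle (hPa : ∀ i < n, P i = a)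
    (hT : ∀ i j, i < n → j < P i → T i j = i + 1) : BalancedF n P (fun _ => 0) T 1 n := by
  intro s hs hsn
  have hsize : skewSize n P (fun _ => 0) = n * a := by
    rw [skewSize_zero_right, ysize, sum_congr rfl fun i hi => hPa i (mem_range.mp hi)]
    simp
  rw [cntAll_eq_cntCols (j := a) fun i c hi _ hc _ => hPa i hi ▸ hc,
    cntCols_of_canonical (fun i c hi hc => hT i c hi (lt_min_iff.mp hc).2) hs hsn,
    hPa _ (by omega), min_self, hsize, Nat.add_sub_cancel]

lemma codom_of_rectangle (hPa : ∀ i < n, P i = a)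
    (hT : ∀ i j, i < n → j < P i → T i j = i + 1) :
    ∀ i, 1 ≤ i → i < n → Codom n P (fun _ => 0) T i := by
  intro i hi hin j
  have hT' : ∀ i c, i < n → c < min j (P i) → T i c = i + 1 :=
    fun i c hi hc => hT i c hi (lt_min_iff.mp hc).2
  rw [cntCols_of_canonical hT' hi hin.le, cntCols_of_canonical hT' (by omega) hin,
    hPa _ (by omega), hPa _ (by omega)]

end Rectangle

theorem stmt_3_general (k : ℕ) (P : ℕ → ℕ) (hP : IsYoung k P) (T : ℕ → ℕ → ℕ) :
    (SkewSemistd P (fun _ => 0) T ∧ InAlpha P (fun _ => 0) T 1 k ∧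
      BalancedF k P (fun _ => 0) T 1 k ∧
      (∀ i, 1 ≤ i → i < k → Codom k P (fun _ => 0) T i)) ↔
    (∃ a : ℕ, (∀ i, i < k → P i = a) ∧ ∀ i j, i < k → j < P i → T i j = i + 1) := by
  constructor
  · rintro ⟨hss, ha, hb, hc⟩
    have hcan : ∀ j ≤ P 0, CanonicalUpTo k P T j := by
      intro j
      induction j with
      | zero => exact fun _ => ⟨fun _ _ => Nat.zero_le _, fun _ _ _ hc => absurd hc (Nat.not_lt_zero _)⟩
      | succ j ih => exact fun hj => (ih (by omega)).succ hP hss ha hb hc (by omega)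
    obtain ⟨hwidth, hfill⟩ := hcan (P 0) le_rfl
    exact ⟨P 0, fun i hi => le_antisymm (hP.antitone (Nat.zero_le i)) (hwidth i hi),
      fun i j hi hj => hfill i j hi (hj.trans_le (hP.antitone (Nat.zero_le i)))⟩
  · rintro ⟨a, hPa, hT⟩
    exact ⟨skewSemistd_of_canonical hP hT, inAlpha_of_canonical hP hT,
      balancedF_of_rectangle hPa hT, codom_of_rectangle hPa hT⟩

/-- For `k ≥ 1`, the only balanced semistandard Young tableaux of order `k` on the
alphabet `{1, …, k}` that are `α_i`-codominant for all `i = 1, …, k-1` are the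
rectangular tableaux `R_k^a` (with `k` rows of common length `a`, row `s` filled with
the symbol `s`), for integer offsets `a ≥ 0`. -/
theorem stmt_3 (k : ℕ) (hk : 1 ≤ k) (P : ℕ → ℕ) (hP : IsYoung k P) (T : ℕ → ℕ → ℕ) :
    (SkewSemistd P (fun _ => 0) T ∧ InAlpha P (fun _ => 0) T 1 k ∧
      BalancedF k P (fun _ => 0) T 1 k ∧
      (∀ i, 1 ≤ i → i < k → Codom k P (fun _ => 0) T i)) ↔
    (∃ a : ℕ, (∀ i, i < k → P i = a) ∧ ∀ i j, i < k → j < P i → T i j = i + 1) :=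
  stmt_3_general k P hP T
end

section
/- For n = 2m, the basis of the monoid of Young diagrams of order n satisfying the inequalities ∑_{i=1}^{n−1} min(i−2, n−i) x_i ≥ 0 and ∑_{i=1}^{n−1} min(i, n−i−2) x_i ≥ 0 (where x_i is the number of columns of height i) equals {C_i : 2 ≤ i ≤ n−2} ∪ {C_n} ∪ {C_i + a·C_1 : 0 < a ≤ min(i−2, n−i)} ∪ {C_i + a·C_{n−1} : 0 < a ≤ min(i, n−i−2)}. -/
/-- The single-column Young diagram of height `i`. -/
def Col (i : ℕ) : ℕ → ℕ := fun r => if r < i then 1 else 0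

/-- `P` is a nonzero primitive element of the submonoid `{R | S R}` of Young diagrams
under rowwise addition: it belongs to it, is nonzero, and is not the sum of two
nonzero elements of it. -/
def PrimitiveIn (S : (ℕ → ℕ) → Prop) (P : ℕ → ℕ) : Prop :=
  S P ∧ P ≠ (fun _ => 0) ∧
  ∀ A B : ℕ → ℕ, S A → S B → A ≠ (fun _ => 0) → B ≠ (fun _ => 0) →
    P ≠ (fun r => A r + B r)

/-- The pair of inequalities (6.2.3.m) on the row lengths `p_i = P (i-1)`:
`-p₁ + ∑_{i=2}^{m+1} p_i - ∑_{i=m+2}^{2m} p_i ≥ 0` and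
`-∑_{i=1}^{m-1} p_i + ∑_{i=m}^{2m-1} p_i - p_{2m} ≤ 0`. -/
def RowIneq (m : ℕ) (P : ℕ → ℕ) : Prop :=
  0 ≤ -(P 0 : ℤ) + ∑ i ∈ Finset.Icc 2 (m + 1), (P (i - 1) : ℤ)
      - ∑ i ∈ Finset.Icc (m + 2) (2 * m), (P (i - 1) : ℤ) ∧
  -(∑ i ∈ Finset.Icc 1 (m - 1), (P (i - 1) : ℤ))
      + ∑ i ∈ Finset.Icc m (2 * m - 1), (P (i - 1) : ℤ) - (P (2 * m - 1) : ℤ) ≤ 0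

/-- The coordinate form of the inequalities: writing `x_i = P (i-1) - P i` for the
number of columns of height `i`, `∑_{i=1}^{n-1} min(i-2, n-i)·x_i ≥ 0` and
`∑_{i=1}^{n-1} min(i, n-i-2)·x_i ≥ 0`. -/
def CoordIneq (n : ℕ) (P : ℕ → ℕ) : Prop :=
  0 ≤ ∑ i ∈ Finset.Icc 1 (n - 1), min ((i : ℤ) - 2) ((n : ℤ) - i) * ((P (i - 1) : ℤ) - (P i : ℤ)) ∧
  0 ≤ ∑ i ∈ Finset.Icc 1 (n - 1), min (i : ℤ) ((n : ℤ) - i - 2) * ((P (i - 1) : ℤ) - (P i : ℤ))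

/-!
Write `x_i` for the number of columns of height `i`. The forms `F = ∑ min(i-2, n-i) x_i` and
`G = ∑ min(i, n-i-2) x_i` are linear in `x`, and each has a single negative coefficient:
`-1` at `x_1` for `F`, `-1` at `x_{n-1}` for `G`.
If a primitive diagram `P` has `x_1 = x_{n-1} = 0`, any single column `C_i` of `P` can be split
off, since removing columns of heights other than `1` and `n-1` keeps both forms nonnegative;
so `P = C_i`. If `x_1 > 0` and `x_{n-1} > 0`, then `C_1 + C_{n-1}`, on which both forms vanish,
can be split off. If only `x_1 > 0`, then `F(P) ≥ 0` forces a column `i` with positive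
coefficient, and `C_i + a C_1` with `a = min(x_1, min(i-2, n-i))` can be split off: either it
takes all columns of height `1`, or `F` vanishes on it; symmetrically if only `x_{n-1} > 0`.
Conversely, in a splitting of a listed diagram one summand consists of columns of the negatively
weighted height only, so `F` or `G` is negative on it.
-/

namespace YoungMonoid

open Finset

def colCount (P : ℕ → ℕ) (i : ℕ) : ℕ := P (i - 1) - P i

def linForm (c : ℕ → ℤ) (n : ℕ) (P : ℕ → ℕ) : ℤ :=
  ∑ i ∈ Icc 1 (n - 1), c i * ((P (i - 1) : ℤ) - (P i : ℤ))

def coeffF (n i : ℕ) : ℤ := min ((i : ℤ) - 2) ((n : ℤ) - i)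

def coeffG (n i : ℕ) : ℤ := min (i : ℤ) ((n : ℤ) - i - 2)

def Admissible (c d : ℕ → ℤ) (n : ℕ) (P : ℕ → ℕ) : Prop :=
  IsYoung n P ∧ 0 ≤ linForm c n P ∧ 0 ≤ linForm d n P

def NonnegExcept (c : ℕ → ℤ) (n j : ℕ) : Prop :=
  ∀ i ∈ Icc 1 (n - 1), i ≠ j → 0 ≤ c i

def IsBasisDiagram (n : ℕ) (P : ℕ → ℕ) : Prop :=
  (∃ i, 2 ≤ i ∧ i ≤ n - 2 ∧ P = Col i) ∨ P = Col n ∨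
    (∃ i a : ℕ, 1 ≤ i ∧ i ≤ n ∧ 0 < a ∧ (a : ℤ) ≤ coeffF n i ∧
      P = fun r => Col i r + a * Col 1 r) ∨
    (∃ i a : ℕ, 1 ≤ i ∧ i ≤ n ∧ 0 < a ∧ (a : ℤ) ≤ coeffG n i ∧
      P = fun r => Col i r + a * Col (n - 1) r)

section Young

variable {n i j a : ℕ} {P Y A B : ℕ → ℕ}

theorem _root_.IsYoung.antitone_s12 (h : IsYoung n P) : Antitone P := antitone_nat_of_succ_le h.1

theorem _root_.IsYoung.eq_zero_of_apply_zero (h : IsYoung n P) (h0 : P 0 = 0) : P = fun _ => 0 :=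
  funext fun r => Nat.eq_zero_of_le_zero (h0 ▸ h.antitone_s12 (Nat.zero_le r))

theorem _root_.IsYoung.add (hA : IsYoung n A) (hB : IsYoung n B) : IsYoung n fun r => A r + B r :=
  ⟨fun r => Nat.add_le_add (hA.1 r) (hB.1 r), fun r hr => by simp [hA.2 r hr, hB.2 r hr]⟩

theorem _root_.IsYoung.const_mul (a : ℕ) (hA : IsYoung n A) : IsYoung n fun r => a * A r :=
  ⟨fun r => Nat.mul_le_mul_left a (hA.1 r), fun r hr => by simp [hA.2 r hr]⟩

theorem isYoung_col (h : i ≤ n) : IsYoung n (Col i) :=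
  ⟨fun r => by unfold Col; split_ifs <;> omega, fun r hr => if_neg (by omega)⟩

theorem isYoung_twoCol (a : ℕ) (hi : i ≤ n) (hj : j ≤ n) :
    IsYoung n fun r => Col i r + a * Col j r :=
  (isYoung_col hi).add ((isYoung_col hj).const_mul a)

theorem twoCol_ne_zero (hi : 1 ≤ i) : (fun r => Col i r + a * Col j r) ≠ fun _ => 0 := by
  intro h
  have h0 := congrFun h 0
  simp only [Col] at h0
  split_ifs at h0 <;> omega

theorem col_ne_zero (hi : 1 ≤ i) : Col i ≠ fun _ => 0 := fun h => by
  simpa [Col, show 0 < i from hi] using congrFun h 0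

theorem _root_.IsYoung.cast_colCount (h : IsYoung n P) (i : ℕ) :
    (colCount P i : ℤ) = P (i - 1) - P i := by
  have := h.antitone_s12 (Nat.sub_le i 1)
  unfold colCount
  omega

theorem colCount_add (hA : IsYoung n A) (hB : IsYoung n B) (i : ℕ) :
    colCount (fun r => A r + B r) i = colCount A i + colCount B i := by
  have := hA.antitone_s12 (Nat.sub_le i 1)
  have := hB.antitone_s12 (Nat.sub_le i 1)
  simp only [colCount]
  omega

theorem colCount_col {l : ℕ} (hl : 1 ≤ l) : colCount (Col i) l = if l = i then 1 else 0 := by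
  simp only [colCount, Col]
  split_ifs <;> omega

theorem colCount_twoCol {l : ℕ} (hl : 1 ≤ l) :
    colCount (fun r => Col i r + a * Col j r) l =
      (if l = i then 1 else 0) + a * if l = j then 1 else 0 := by
  simp only [colCount, Col]
  split_ifs <;> omega

theorem colCount_col_le (hxi : 1 ≤ colCount P i) (l : ℕ) :
    colCount (Col i) l ≤ colCount P l := by
  rcases Nat.eq_zero_or_pos l with rfl | hl
  · simp [colCount]
  rw [colCount_col hl]
  split_ifs with hli
  · exact hli ▸ hxi
  · exact Nat.zero_le _

theorem colCount_twoCol_le (hij : i ≠ j) (hxi : 1 ≤ colCount P i) (hxj : a ≤ colCount P j)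
    (l : ℕ) : colCount (fun r => Col i r + a * Col j r) l ≤ colCount P l := by
  rcases Nat.eq_zero_or_pos l with rfl | hl
  · simp [colCount]
  rw [colCount_twoCol hl]
  split_ifs <;> subst_vars <;> omega

theorem _root_.IsYoung.sub (hP : IsYoung n P) (hY : IsYoung n Y)
    (hle : ∀ l, colCount Y l ≤ colCount P l) :
    (∀ r, Y r ≤ P r) ∧ IsYoung n fun r => P r - Y r := by
  have hstep : ∀ r, Y r - Y (r + 1) ≤ P r - P (r + 1) := fun r => by
    simpa [colCount] using hle (r + 1)
  have hdom : ∀ k r, n ≤ r + k → Y r ≤ P r := by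
    intro k
    induction k with
    | zero => intro r hr; rw [hY.2 r (by omega), hP.2 r (by omega)]
    | succ k ih =>
      intro r hr
      have := ih (r + 1) (by omega)
      have := hstep r
      have := hP.1 r
      have := hY.1 r
      omega
  have hle' : ∀ r, Y r ≤ P r := fun r => hdom n r (by omega)
  refine ⟨hle', fun r => ?_, fun r hr => by simp [hP.2 r hr]⟩
  show P (r + 1) - Y (r + 1) ≤ P r - Y r
  have := hle' (r + 1)
  have := hstep r
  have := hP.1 r
  have := hY.1 r
  omega

theorem _root_.IsYoung.exists_colCount_pos (h : IsYoung n P) (h0 : P ≠ fun _ => 0) :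
    ∃ i ∈ Icc 1 n, 0 < colCount P i := by
  by_contra! hcon
  have hconst : ∀ k ≤ n, P k = P 0 := by
    intro k
    induction k with
    | zero => intro _; rfl
    | succ k ih =>
      intro hk
      have hx := hcon (k + 1) (mem_Icc.2 ⟨by omega, hk⟩)
      have := h.1 k
      simp only [colCount, Nat.add_sub_cancel] at hx
      omega
  exact h0 (h.eq_zero_of_apply_zero (hconst n le_rfl ▸ h.2 n le_rfl))

end Young

section LinForm

variable {c : ℕ → ℤ} {n i j a : ℕ} {P : ℕ → ℕ}

theorem linForm_add (A B : ℕ → ℕ) :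
    linForm c n (fun r => A r + B r) = linForm c n A + linForm c n B := by
  simp only [linForm, ← sum_add_distrib]
  refine sum_congr rfl fun l _ => ?_
  push_cast
  ring

theorem linForm_const_mul (a : ℕ) (A : ℕ → ℕ) :
    linForm c n (fun r => a * A r) = a * linForm c n A := by
  simp only [linForm, mul_sum]
  refine sum_congr rfl fun l _ => ?_
  push_cast
  ring

theorem _root_.IsYoung.linForm_eq (h : IsYoung n P) :
    linForm c n P = ∑ i ∈ Icc 1 (n - 1), c i * colCount P i :=
  sum_congr rfl fun i _ => by rw [h.cast_colCount]

theorem linForm_col (hi : i ∈ Icc 1 (n - 1)) : linForm c n (Col i) = c i := by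
  rw [(isYoung_col (n := n) (by grind)).linForm_eq, sum_eq_single_of_mem i hi]
  · simp [colCount_col (mem_Icc.1 hi).1]
  · intro l hl hli
    simp [colCount_col (mem_Icc.1 hl).1, hli]

theorem linForm_twoCol (hi : i ∈ Icc 1 (n - 1)) (hj : j ∈ Icc 1 (n - 1)) :
    linForm c n (fun r => Col i r + a * Col j r) = c i + a * c j := by
  rw [linForm_add, linForm_const_mul, linForm_col hi, linForm_col hj]

theorem _root_.IsYoung.linForm_nonneg (h : IsYoung n P) (hc : NonnegExcept c n j)
    (hxj : colCount P j = 0) : 0 ≤ linForm c n P := by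
  rw [h.linForm_eq]
  refine sum_nonneg fun i hi => ?_
  by_cases hij : i = j
  · simp [hij, hxj]
  · exact mul_nonneg (hc i hi hij) (Nat.cast_nonneg _)

theorem _root_.IsYoung.linForm_neg (h : IsYoung n P) (h0 : P ≠ fun _ => 0)
    (hj : j ∈ Icc 1 (n - 1)) (hcj : c j < 0)
    (hx : ∀ i ∈ Icc 1 n, i ≠ j → colCount P i = 0) : linForm c n P < 0 := by
  obtain ⟨i, hi, hxi⟩ := h.exists_colCount_pos h0
  obtain rfl : i = j := by_contra fun hij => hxi.ne' (hx i hi hij)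
  rw [h.linForm_eq, sum_eq_single_of_mem i hj fun l hl hli => by
    simp [hx l (Icc_subset_Icc_right (Nat.sub_le n 1) hl) hli]]
  exact mul_neg_of_neg_of_pos hcj (by exact_mod_cast hxi)

theorem _root_.IsYoung.exists_pos_coeff (h : IsYoung n P) (hj : j ∈ Icc 1 (n - 1)) (hcj : c j < 0)
    (hxj : 0 < colCount P j) (hL : 0 ≤ linForm c n P) :
    ∃ i ∈ Icc 1 (n - 1), i ≠ j ∧ 0 < c i ∧ 0 < colCount P i := by
  by_contra! hcon
  have hrest : ∑ i ∈ (Icc 1 (n - 1)).erase j, c i * colCount P i ≤ 0 := by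
    refine sum_nonpos fun i hi => ?_
    obtain ⟨hij, hi⟩ := mem_erase.1 hi
    rcases le_or_gt (c i) 0 with hci | hci
    · exact mul_nonpos_of_nonpos_of_nonneg hci (Nat.cast_nonneg _)
    · simp [Nat.le_zero.1 (hcon i hi hij hci)]
  have hjterm : c j * colCount P j < 0 := mul_neg_of_neg_of_pos hcj (by exact_mod_cast hxj)
  rw [h.linForm_eq, ← add_sum_erase _ _ hj] at hL
  linarith

end LinForm

section Primitive

variable {S : (ℕ → ℕ) → Prop} {P Y : ℕ → ℕ}

theorem _root_.PrimitiveIn.eq_of_le (hP : PrimitiveIn S P) (hY : S Y) (hY0 : Y ≠ fun _ => 0)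
    (hle : ∀ r, Y r ≤ P r) (hQ : S fun r => P r - Y r) : P = Y := by
  by_contra hne
  refine hP.2.2 Y _ hY hQ hY0 (fun hQ0 => hne (funext fun r => ?_)) (funext fun r => ?_)
  · have := congrFun hQ0 r
    have := hle r
    omega
  · have := hle r
    omega

theorem primitiveIn_col {n i : ℕ} (hS : ∀ R, S R → IsYoung n R) (hi : 1 ≤ i)
    (hC : S (Col i)) : PrimitiveIn S (Col i) := by
  refine ⟨hC, col_ne_zero hi, fun A B hA hB hA0 hB0 h => ?_⟩
  have h0 : 1 = A 0 + B 0 := by simpa [Col, show 0 < i from hi] using congrFun h 0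
  rcases (show A 0 = 0 ∨ B 0 = 0 by omega) with hA' | hB'
  · exact hA0 ((hS A hA).eq_zero_of_apply_zero hA')
  · exact hB0 ((hS B hB).eq_zero_of_apply_zero hB')

end Primitive

section Admissible

variable {c d : ℕ → ℤ} {n i j k a : ℕ} {P Y : ℕ → ℕ}

theorem admissible_comm : Admissible c d n = Admissible d c n :=
  funext fun _ => propext (and_congr_right' and_comm)

theorem admissible_col (hc : NonnegExcept c n j) (hd : NonnegExcept d n k) (hj : 1 ≤ j)
    (hk : 1 ≤ k) (hi : i ≤ n) (hij : i ≠ j) (hik : i ≠ k) : Admissible c d n (Col i) :=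
  ⟨isYoung_col hi, (isYoung_col hi).linForm_nonneg hc (by simp [colCount_col hj, hij.symm]),
    (isYoung_col hi).linForm_nonneg hd (by simp [colCount_col hk, hik.symm])⟩

theorem linForm_sub_nonneg (hP : IsYoung n P) (hY : IsYoung n Y)
    (hle : ∀ l, colCount Y l ≤ colCount P l) (hL : 0 ≤ linForm c n P)
    (hcY : NonnegExcept c n j ∧ colCount Y j = colCount P j ∨ linForm c n Y ≤ 0) :
    0 ≤ linForm c n fun r => P r - Y r := by
  obtain ⟨hYP, hQ⟩ := hP.sub hY hle
  have hsplit : (fun r => Y r + (P r - Y r)) = P := funext fun r => by have := hYP r; omega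
  rcases hcY with ⟨hc, hxj⟩ | hcY
  · refine hQ.linForm_nonneg hc ?_
    have := colCount_add hY hQ j
    rw [hsplit] at this
    omega
  · have := linForm_add (c := c) (n := n) Y fun r => P r - Y r
    rw [hsplit] at this
    linarith

theorem _root_.PrimitiveIn.eq_of_colCount_le (hP : PrimitiveIn (Admissible c d n) P)
    (hY : Admissible c d n Y) (hY0 : Y ≠ fun _ => 0) (hle : ∀ l, colCount Y l ≤ colCount P l)
    (hcY : NonnegExcept c n j ∧ colCount Y j = colCount P j ∨ linForm c n Y ≤ 0)
    (hdY : NonnegExcept d n k ∧ colCount Y k = colCount P k ∨ linForm d n Y ≤ 0) : P = Y :=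
  hP.eq_of_le hY hY0 (hP.1.1.sub hY.1 hle).1
    ⟨(hP.1.1.sub hY.1 hle).2, linForm_sub_nonneg hP.1.1 hY.1 hle hP.1.2.1 hcY,
      linForm_sub_nonneg hP.1.1 hY.1 hle hP.1.2.2 hdY⟩

theorem _root_.PrimitiveIn.eq_col (hP : PrimitiveIn (Admissible c d n) P) (hc : NonnegExcept c n j)
    (hd : NonnegExcept d n k) (hj : 1 ≤ j) (hk : 1 ≤ k) (hxj : colCount P j = 0)
    (hxk : colCount P k = 0) : ∃ i ∈ Icc 1 n, i ≠ j ∧ i ≠ k ∧ P = Col i := by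
  obtain ⟨i, hi, hxi⟩ := hP.1.1.exists_colCount_pos hP.2.1
  have hij : i ≠ j := by rintro rfl; omega
  have hik : i ≠ k := by rintro rfl; omega
  have hi' := mem_Icc.1 hi
  refine ⟨i, hi, hij, hik, hP.eq_of_colCount_le (admissible_col hc hd hj hk hi'.2 hij hik)
    (col_ne_zero hi'.1) (colCount_col_le hxi) (.inl ⟨hc, ?_⟩) (.inl ⟨hd, ?_⟩)⟩
  · simp [colCount_col hj, hij.symm, hxj]
  · simp [colCount_col hk, hik.symm, hxk]

theorem _root_.PrimitiveIn.eq_col_add_col (hP : PrimitiveIn (Admissible c d n) P)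
    (hj : j ∈ Icc 1 (n - 1)) (hk : k ∈ Icc 1 (n - 1)) (hjk : j ≠ k)
    (hcj : c j = -1) (hck : c k = 1) (hdj : d j = 1) (hdk : d k = -1)
    (hxj : 0 < colCount P j) (hxk : 0 < colCount P k) :
    P = fun r => Col j r + 1 * Col k r := by
  have hj' := mem_Icc.1 hj
  have hF : linForm c n (fun r => Col j r + 1 * Col k r) = 0 := by
    rw [linForm_twoCol hj hk, hcj, hck]; norm_num
  have hG : linForm d n (fun r => Col j r + 1 * Col k r) = 0 := by
    rw [linForm_twoCol hj hk, hdj, hdk]; norm_num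
  exact hP.eq_of_colCount_le (j := j) (k := k)
    ⟨isYoung_twoCol 1 (by omega) (by grind), hF.ge, hG.ge⟩ (twoCol_ne_zero hj'.1)
    (colCount_twoCol_le hjk hxj hxk) (.inr hF.le) (.inr hG.le)

theorem _root_.PrimitiveIn.eq_col_add_smul_col (hP : PrimitiveIn (Admissible c d n) P)
    (hc : NonnegExcept c n j) (hd : NonnegExcept d n k) (hj : j ∈ Icc 1 (n - 1)) (hk : 1 ≤ k)
    (hcj : c j = -1) (hdj : 0 ≤ d j) (hxj : 0 < colCount P j) (hxk : colCount P k = 0) :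
    ∃ i ∈ Icc 1 (n - 1), ∃ a : ℕ, 0 < a ∧ (a : ℤ) ≤ c i ∧
      P = fun r => Col i r + a * Col j r := by
  obtain ⟨i, hi, hij, hci, hxi⟩ := hP.1.1.exists_pos_coeff hj (by omega) hxj hP.1.2.1
  obtain ⟨b, hb⟩ := Int.eq_ofNat_of_zero_le hci.le
  have hik : i ≠ k := by rintro rfl; omega
  have hjk : j ≠ k := by rintro rfl; omega
  have hi' := mem_Icc.1 hi
  set a := min (colCount P j) b
  have hF : linForm c n (fun r => Col i r + a * Col j r) = c i - a := by
    rw [linForm_twoCol hi hj, hcj]; ring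
  have hG : 0 ≤ linForm d n (fun r => Col i r + a * Col j r) := by
    rw [linForm_twoCol hi hj]
    exact add_nonneg (hd i hi hik) (mul_nonneg (Nat.cast_nonneg a) hdj)
  refine ⟨i, hi, a, by omega, by omega, hP.eq_of_colCount_le (j := j) (k := k)
    ⟨isYoung_twoCol a (by omega) (by grind), by omega, hG⟩ (twoCol_ne_zero hi'.1)
    (colCount_twoCol_le hij hxi (min_le_left _ _)) ?_ (.inl ⟨hd, ?_⟩)⟩
  · by_cases hxa : a = colCount P j
    · exact .inl ⟨hc, by simp [colCount_twoCol (mem_Icc.1 hj).1, hij.symm, hxa]⟩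
    · exact .inr (by omega)
  · simp [colCount_twoCol hk, hik.symm, hjk.symm, hxk]

theorem linForm_neg_of_add_eq_twoCol {A B : ℕ → ℕ} (hA : IsYoung n A) (hB : IsYoung n B)
    (hA0 : A ≠ fun _ => 0) (hj : j ∈ Icc 1 (n - 1)) (hcj : c j < 0)
    (hsum : (fun r => Col i r + a * Col j r) = fun r => A r + B r) (hxi : colCount A i = 0) :
    linForm c n A < 0 := by
  refine hA.linForm_neg hA0 hj hcj fun l hl hlj => ?_
  by_cases hli : l = i
  · exact hli ▸ hxi
  · have := colCount_add hA hB l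
    rw [← hsum, colCount_twoCol (mem_Icc.1 hl).1, if_neg hli, if_neg hlj] at this
    omega

theorem primitiveIn_twoCol (hY : Admissible c d n fun r => Col i r + a * Col j r)
    (hi : 1 ≤ i) (hj : j ∈ Icc 1 (n - 1)) (hij : i ≠ j) (hcj : c j < 0) :
    PrimitiveIn (Admissible c d n) fun r => Col i r + a * Col j r := by
  refine ⟨hY, twoCol_ne_zero (a := a) (j := j) hi, fun A B hA hB hA0 hB0 hsum => ?_⟩
  have hxi := colCount_add hA.1 hB.1 i
  rw [← hsum, colCount_twoCol hi, if_pos rfl, if_neg hij] at hxi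
  rcases (show colCount A i = 0 ∨ colCount B i = 0 by omega) with hxA | hxB
  · exact (linForm_neg_of_add_eq_twoCol hA.1 hB.1 hA0 hj hcj hsum hxA).not_ge hA.2.1
  · refine (linForm_neg_of_add_eq_twoCol (a := a) hB.1 hA.1 hB0 hj hcj ?_ hxB).not_ge hB.2.1
    rw [hsum]
    exact funext fun r => Nat.add_comm _ _

end Admissible

section Coefficients

variable {n : ℕ}

theorem nonnegExcept_coeffF : NonnegExcept (coeffF n) n 1 := fun i hi hi1 => by
  have := mem_Icc.1 hi
  unfold coeffF
  omega

theorem nonnegExcept_coeffG : NonnegExcept (coeffG n) n (n - 1) := fun i hi hi1 => by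
  have := mem_Icc.1 hi
  unfold coeffG
  omega

theorem coeffF_one : coeffF n 1 = -1 := by unfold coeffF; omega

theorem coeffG_one (hn : 4 ≤ n) : coeffG n 1 = 1 := by unfold coeffG; omega

theorem coeffF_sub_one (hn : 4 ≤ n) : coeffF n (n - 1) = 1 := by unfold coeffF; omega

theorem coeffG_sub_one (hn : 1 ≤ n) : coeffG n (n - 1) = -1 := by unfold coeffG; omega

end Coefficients

variable {n : ℕ} {P : ℕ → ℕ}

theorem isBasisDiagram_of_primitiveIn (hn : 4 ≤ n)
    (hP : PrimitiveIn (Admissible (coeffF n) (coeffG n) n) P) : IsBasisDiagram n P := by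
  have h1 : 1 ∈ Icc 1 (n - 1) := mem_Icc.2 ⟨le_rfl, by omega⟩
  have hl : n - 1 ∈ Icc 1 (n - 1) := mem_Icc.2 ⟨by omega, le_rfl⟩
  rcases (colCount P 1).eq_zero_or_pos with hx1 | hx1 <;>
    rcases (colCount P (n - 1)).eq_zero_or_pos with hxl | hxl
  · obtain ⟨i, hi, hi1, hil, rfl⟩ :=
      hP.eq_col nonnegExcept_coeffF nonnegExcept_coeffG le_rfl (by omega) hx1 hxl
    rcases (show i ≤ n - 2 ∨ i = n by grind) with hi' | rfl
    · exact .inl ⟨i, by grind, hi', rfl⟩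
    · exact .inr (.inl rfl)
  · rw [admissible_comm] at hP
    obtain ⟨i, hi, a, ha, hai, rfl⟩ := hP.eq_col_add_smul_col nonnegExcept_coeffG
      nonnegExcept_coeffF hl le_rfl (coeffG_sub_one (by omega))
      (by rw [coeffF_sub_one hn]; norm_num) hxl hx1
    exact .inr (.inr (.inr ⟨i, a, by grind, by grind, ha, hai, rfl⟩))
  · obtain ⟨i, hi, a, ha, hai, rfl⟩ := hP.eq_col_add_smul_col nonnegExcept_coeffF
      nonnegExcept_coeffG h1 (by omega) coeffF_one (by rw [coeffG_one hn]; norm_num) hx1 hxl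
    exact .inr (.inr (.inl ⟨i, a, by grind, by grind, ha, hai, rfl⟩))
  · rw [hP.eq_col_add_col h1 hl (by omega) coeffF_one (coeffF_sub_one hn) (coeffG_one hn)
      (coeffG_sub_one (by omega)) hx1 hxl]
    exact .inr (.inr (.inr
      ⟨1, 1, le_rfl, by omega, one_pos, by rw [coeffG_one hn]; norm_num, rfl⟩))

theorem primitiveIn_of_isBasisDiagram (hn : 4 ≤ n) (hP : IsBasisDiagram n P) :
    PrimitiveIn (Admissible (coeffF n) (coeffG n) n) P := by
  have h1 : 1 ∈ Icc 1 (n - 1) := mem_Icc.2 ⟨le_rfl, by omega⟩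
  have hl : n - 1 ∈ Icc 1 (n - 1) := mem_Icc.2 ⟨by omega, le_rfl⟩
  rcases hP with ⟨i, hi2, hin, rfl⟩ | rfl | ⟨i, a, hi1, hin, ha, hai, rfl⟩ |
    ⟨i, a, hi1, hin, ha, hai, rfl⟩
  · exact primitiveIn_col (fun R hR => hR.1) (by omega) (admissible_col nonnegExcept_coeffF
      nonnegExcept_coeffG le_rfl (by omega) (by omega) (by omega) (by omega))
  · exact primitiveIn_col (fun R hR => hR.1) (by omega) (admissible_col nonnegExcept_coeffF
      nonnegExcept_coeffG le_rfl (by omega) le_rfl (by omega) (by omega))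
  · have hi : i ∈ Icc 1 (n - 1) := mem_Icc.2 ⟨hi1, by unfold coeffF at hai; omega⟩
    refine primitiveIn_twoCol ⟨isYoung_twoCol a hin (by omega), ?_, ?_⟩ hi1 h1
      (by unfold coeffF at hai; omega) (by rw [coeffF_one]; norm_num)
    · rw [linForm_twoCol hi h1, coeffF_one]; omega
    · rw [linForm_twoCol hi h1, coeffG_one hn]; unfold coeffG; unfold coeffF at hai; omega
  · have hi : i ∈ Icc 1 (n - 1) := mem_Icc.2 ⟨hi1, by unfold coeffG at hai; omega⟩
    rw [admissible_comm]
    refine primitiveIn_twoCol ⟨isYoung_twoCol a hin (by omega), ?_, ?_⟩ hi1 hl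
      (by unfold coeffG at hai; omega) (by rw [coeffG_sub_one (by omega)]; norm_num)
    · rw [linForm_twoCol hi hl, coeffG_sub_one (by omega)]; omega
    · rw [linForm_twoCol hi hl, coeffF_sub_one hn]; unfold coeffF; unfold coeffG at hai; omega

end YoungMonoid

/-- For `n = 2m`, the basis of the monoid of Young diagrams of order `n` satisfying
`∑ min(i-2, n-i) x_i ≥ 0` and `∑ min(i, n-i-2) x_i ≥ 0` is
`{C_i : 2 ≤ i ≤ n-2} ∪ {C_n} ∪ {C_i + a·C_1 : 0 < a ≤ min(i-2, n-i)} ∪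
{C_i + a·C_{n-1} : 0 < a ≤ min(i, n-i-2)}`. -/
theorem stmt_12 (m n : ℕ) (hm : 2 ≤ m) (hn : n = 2 * m) (P : ℕ → ℕ) :
    PrimitiveIn (fun R => IsYoung n R ∧ CoordIneq n R) P ↔
    ((∃ i, 2 ≤ i ∧ i ≤ n - 2 ∧ P = Col i) ∨ P = Col n ∨
      (∃ i a : ℕ, 1 ≤ i ∧ i ≤ n ∧ 0 < a ∧ (a : ℤ) ≤ min ((i : ℤ) - 2) ((n : ℤ) - i) ∧
        P = fun r => Col i r + a * Col 1 r) ∨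
      (∃ i a : ℕ, 1 ≤ i ∧ i ≤ n ∧ 0 < a ∧ (a : ℤ) ≤ min (i : ℤ) ((n : ℤ) - i - 2) ∧
        P = fun r => Col i r + a * Col (n - 1) r)) := by
  have hS : (fun R => IsYoung n R ∧ CoordIneq n R) =
      YoungMonoid.Admissible (YoungMonoid.coeffF n) (YoungMonoid.coeffG n) n := rfl
  rw [hS]
  exact ⟨YoungMonoid.isBasisDiagram_of_primitiveIn (by omega),
    YoungMonoid.primitiveIn_of_isBasisDiagram (by omega)⟩
end
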